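/- For every α > 0, β > 0 and x₁, x₂ ∈ ℝ there exists a constant C > 0 depending only on α and β such that for all (t,x) ∈ ℝ×ℝ, |B_{α,β}(t,x;x₁,x₂)| ≤ C·exp(−β·|x + x₂ + γ·t|), where γ = 3α² − β². -/

import Mathlib

open Real

/-- The mKdV breather
`B_{α,β}(t,x;x₁,x₂) = 2√2 ∂_x [arctan((β/α) sin(α y₁)/cosh(β y₂))]`
with `y₁ = x + δt + x₁`, `y₂ = x + γt + x₂`, `δ = α² - 3β²`, `γ = 3α² - β²`,
as a function of `t` then `x`. -/
noncomputable def breather (α β x₁ x₂ : ℝ) : ℝ → ℝ → ℝ :=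
  fun t x =>
    2 * Real.sqrt 2 *
      deriv (fun y =>
        Real.arctan ((β / α) * Real.sin (α * (y + (α ^ 2 - 3 * β ^ 2) * t + x₁))
          / Real.cosh (β * (y + (3 * α ^ 2 - β ^ 2) * t + x₂)))) x

lemma exp_abs_le_two_mul_cosh (t : ℝ) : Real.exp |t| ≤ 2 * Real.cosh t := by
  rw [Real.cosh_eq]
  rcases abs_cases t with ⟨h, _⟩ | ⟨h, _⟩ <;> rw [h] <;>
    nlinarith [Real.exp_pos t, Real.exp_pos (-t)]

/-- Pointwise exponential decay of the breather: for every `α, β > 0` there is a constant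
`C > 0`, depending only on `α` and `β`, such that for all `x₁, x₂` and all `(t,x)`,
`|B_{α,β}(t,x;x₁,x₂)| ≤ C exp(-β |x + x₂ + γ t|)` with `γ = 3α² - β²`. -/
theorem breather_exponential_decay (α β : ℝ) (hα : 0 < α) (hβ : 0 < β) :
    ∃ C > 0, ∀ x₁ x₂ t x : ℝ,
      |breather α β x₁ x₂ t x|
        ≤ C * Real.exp (-β * |x + x₂ + (3 * α ^ 2 - β ^ 2) * t|) := by
  have hs2 : (0:ℝ) < Real.sqrt 2 := Real.sqrt_pos.mpr (by norm_num)
  refine ⟨2 * Real.sqrt 2 * (β / α * (α + β)) * 2, by positivity, fun x₁ x₂ t x => ?_⟩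
  set a := (α ^ 2 - 3 * β ^ 2) * t + x₁ with ha
  set b := (3 * α ^ 2 - β ^ 2) * t + x₂ with hb
  set y₁ := x + a with hy₁
  set y₂ := x + b with hy₂
  have hcpos : (0:ℝ) < Real.cosh (β * y₂) := Real.cosh_pos _
  set c := Real.cosh (β * y₂) with hc
  have hch : c ≠ 0 := hcpos.ne'
  -- derivative of the inner function
  have hsin : HasDerivAt (fun y : ℝ => Real.sin (α * (y + a)))
      (Real.cos (α * y₁) * α) x := by
    have : HasDerivAt (fun y : ℝ => α * (y + a)) α x := by
      simpa using ((hasDerivAt_id x).add_const a).const_mul α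
    simpa using this.sin
  have hcosh : HasDerivAt (fun y : ℝ => Real.cosh (β * (y + b)))
      (Real.sinh (β * y₂) * β) x := by
    have : HasDerivAt (fun y : ℝ => β * (y + b)) β x := by
      simpa using ((hasDerivAt_id x).add_const b).const_mul β
    simpa using this.cosh
  set u := (β / α) * Real.sin (α * y₁) / c with hu
  have hdiv : HasDerivAt (fun y : ℝ =>
      (β / α) * Real.sin (α * (y + a)) / Real.cosh (β * (y + b)))
      ((β / α * (Real.cos (α * y₁) * α) * c
        - (β / α) * Real.sin (α * y₁) * (Real.sinh (β * y₂) * β)) / c ^ 2) x :=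
    (hsin.const_mul (β / α)).div hcosh hch
  have harc := hdiv.arctan
  set N := β / α * (Real.cos (α * y₁) * α) * c
      - (β / α) * Real.sin (α * y₁) * (Real.sinh (β * y₂) * β) with hN
  set D := 1 / (1 + u ^ 2) * (N / c ^ 2) with hD
  have hB : breather α β x₁ x₂ t x = 2 * Real.sqrt 2 * D := by
    have h := harc.deriv
    rw [ha, hb] at h
    simp only [← add_assoc] at h
    unfold breather
    rw [h]
  -- bounds
  have hsinh : |Real.sinh (β * y₂)| ≤ c := by
    rw [Real.abs_sinh, hc, ← Real.cosh_abs (β * y₂)]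
    exact (Real.sinh_lt_cosh _).le
  have hNle : |N| ≤ β / α * (α + β) * c := by
    have h1 : |β / α * (Real.cos (α * y₁) * α) * c| ≤ β / α * α * c := by
      rw [abs_mul, abs_mul, abs_mul, abs_of_pos (div_pos hβ hα), abs_of_pos hα,
        abs_of_pos hcpos]
      calc β / α * (|Real.cos (α * y₁)| * α) * c
          = β / α * α * c * |Real.cos (α * y₁)| := by ring
        _ ≤ β / α * α * c * 1 :=
            mul_le_mul_of_nonneg_left (Real.abs_cos_le_one _) (by positivity)
        _ = β / α * α * c := mul_one _
    have h2 : |(β / α) * Real.sin (α * y₁) * (Real.sinh (β * y₂) * β)|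
        ≤ β / α * β * c := by
      rw [abs_mul, abs_mul, abs_mul, abs_of_pos (div_pos hβ hα), abs_of_pos hβ]
      calc β / α * |Real.sin (α * y₁)| * (|Real.sinh (β * y₂)| * β)
          ≤ β / α * 1 * (c * β) := by
            gcongr <;> first
              | exact Real.abs_sin_le_one _
              | exact hsinh
              | positivity
        _ = β / α * β * c := by ring
    calc |N| ≤ |β / α * (Real.cos (α * y₁) * α) * c|
        + |(β / α) * Real.sin (α * y₁) * (Real.sinh (β * y₂) * β)| := abs_sub _ _
      _ ≤ β / α * α * c + β / α * β * c := add_le_add h1 h2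
      _ = β / α * (α + β) * c := by ring
  have h1u : |1 / (1 + u ^ 2)| ≤ 1 := by
    rw [abs_of_pos (by positivity), div_le_one (by positivity)]
    nlinarith [sq_nonneg u]
  have hDle : |D| ≤ β / α * (α + β) / c := by
    rw [hD, abs_mul]
    calc |1 / (1 + u ^ 2)| * |N / c ^ 2| ≤ 1 * (β / α * (α + β) * c / c ^ 2) := by
          apply mul_le_mul h1u ?_ (abs_nonneg _) zero_le_one
          rw [abs_div, abs_of_pos (by positivity : (0:ℝ) < c ^ 2)]
          gcongr
      _ = β / α * (α + β) / c := by field_simp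
  -- exponential lower bound on cosh
  have hexp : Real.exp (β * |y₂|) ≤ 2 * c := by
    have := exp_abs_le_two_mul_cosh (β * y₂)
    rwa [abs_mul, abs_of_pos hβ] at this
  have hinv : 1 / c ≤ 2 * Real.exp (-(β * |y₂|)) := by
    rw [Real.exp_neg]
    calc 1 / c = 2 * (1 / (2 * c)) := by field_simp
      _ ≤ 2 * (1 / Real.exp (β * |y₂|)) :=
          mul_le_mul_of_nonneg_left
            (one_div_le_one_div_of_le (Real.exp_pos _) hexp) (by norm_num)
      _ = 2 * (Real.exp (β * |y₂|))⁻¹ := by rw [one_div]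
  have habs : x + x₂ + (3 * α ^ 2 - β ^ 2) * t = y₂ := by rw [hy₂, hb]; ring
  rw [habs, hB, abs_mul, abs_of_pos (by positivity : (0:ℝ) < 2 * Real.sqrt 2),
    neg_mul, ← mul_comm]
  calc |D| * (2 * Real.sqrt 2) ≤ (β / α * (α + β) / c) * (2 * Real.sqrt 2) := by
        gcongr
    _ = (2 * Real.sqrt 2 * (β / α * (α + β))) * (1 / c) := by ring
    _ ≤ (2 * Real.sqrt 2 * (β / α * (α + β))) * (2 * Real.exp (-(β * |y₂|))) := by
        gcongr
    _ = 2 * Real.sqrt 2 * (β / α * (α + β)) * 2 * Real.exp (-(β * |y₂|)) := by ring
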